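/- arXiv:2307.14002 — 2 statements merged into one kernel-verified Lean document; each statement's English description precedes it below -/
import Mathlib

section
/- Let N = (N_h : h ≥ 0) be a sequence of level numbers with N_0 = 1, finite total sum, and height H(N) = min{h ≥ 1 : N_h = 0}, with N_h = 0 for h ≥ H(N) and N_h > 0 for h < H(N). Then the number of positive excursions x with N(x) = N equals Π_{h=1}^{H(N)-2} C(N_{h+1} + N_h - 1, N_h - 1). -/
/-- `x` restricted to `[0,θ]` is a positive excursion: starts and ends at `0`,
is strictly positive in the interior, and has jumps `±1`. -/
def IsPosExc (x : ℕ → ℤ) (θ : ℕ) : Prop :=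
  x 0 = 0 ∧ x θ = 0 ∧ (∀ n, 0 < n → n < θ → 0 < x n) ∧
    (∀ n, n < θ → x (n + 1) - x n = 1 ∨ x (n + 1) - x n = -1)

/-- `x` restricted to `[0,θ]` is a negative excursion. -/
def IsNegExc (x : ℕ → ℤ) (θ : ℕ) : Prop :=
  x 0 = 0 ∧ x θ = 0 ∧ (∀ n, 0 < n → n < θ → x n < 0) ∧
    (∀ n, n < θ → x (n + 1) - x n = 1 ∨ x (n + 1) - x n = -1)

/-- Number of individuals of the excursion `x` (of length `θ`) born at level `h`,
i.e. number of up-steps from `h` to `h+1`. -/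
def levelCount (x : ℕ → ℤ) (θ : ℕ) (h : ℤ) : ℕ :=
  ((Finset.range θ).filter (fun n => x n = h ∧ x (n + 1) = x n + 1)).card

/-- For negative excursions: number of individuals born at level `h`,
i.e. number of down-steps from `h` to `h-1`. -/
def levelCountDown (x : ℕ → ℤ) (θ : ℕ) (h : ℤ) : ℕ :=
  ((Finset.range θ).filter (fun n => x n = h ∧ x (n + 1) = x n - 1)).card

/-- `(b,t)` is (the birth/death time pair of) an individual of the excursion `x`:
born at time `b` at level `x b`, with an up-step at `b`, dying at the first
return time `t` to its birth level. -/
def IsIndividual (x : ℕ → ℤ) (θ b t : ℕ) : Prop :=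
  b < t ∧ t ≤ θ ∧ x (b + 1) = x b + 1 ∧ x t = x b ∧
    ∀ n, b < n → n < t → x n ≠ x b

/-!
A positive excursion of length `θ` is the height function of a Dyck word of length `θ`, and its
level numbers are the word's `profile`: the numbers of `U` steps starting at each height.
`N 0 = 1` says that the word is a single arch, which is what makes the excursion positive.

Every Dyck word is uniquely a sum of arches `nest a₁ + ⋯ + nest aₖ` with `k = profile 0`.
Sending it to the composition `(aᵢ.profile 0)ᵢ` of `profile 1` into `k` parts, together with
`a₁ + ⋯ + aₖ`, is a bijection onto compositions times Dyck words with the shifted profile: the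
arches of `a₁ + ⋯ + aₖ` can be regrouped along a given composition in exactly one way. Stars and
bars counts the compositions, so by induction on the height the number of Dyck words with
profile `N` is `∏_{h < H} multichoose (N h) (N (h + 1))`, whose factors at `h = 0` and
`h = H - 1` are `1`.
-/

open List DyckStep

theorem List.natCard_length_eq_and_sum_eq (k s : ℕ) :
    Nat.card {c : List ℕ // c.length = k ∧ c.sum = s} = k.multichoose s := by
  let e : {c : List ℕ // c.length = k ∧ c.sum = s} ≃ {P : Fin k → ℕ // ∑ i, P i = s} :=
    { toFun := fun c => ⟨fun i => c.1[i.cast c.2.1.symm], by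
        obtain ⟨c, rfl, rfl⟩ := c; simp [← List.sum_ofFn]⟩
      invFun := fun P => ⟨List.ofFn P.1, by simp, by simp [List.sum_ofFn, P.2]⟩
      left_inv := fun c => by obtain ⟨c, rfl, rfl⟩ := c; simp
      right_inv := fun P => by simp }
  rw [Nat.card_congr (e.trans (Sym.equivNatSumOfFintype (Fin k) s).symm),
    Sym.natCard_sym_eq_multichoose, Nat.card_fin]

theorem levelCount_add (x : ℕ → ℤ) (a b : ℕ) (h : ℤ) :
    levelCount x (a + b) h = levelCount x a h + levelCount (fun n => x (a + n)) b h := by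
  simp only [levelCount, Finset.card_filter, Finset.sum_range_add, add_assoc]

theorem levelCount_congr {x y : ℕ → ℤ} {θ : ℕ} (hxy : ∀ n ≤ θ, x n = y n) (h : ℤ) :
    levelCount x θ h = levelCount y θ h := by
  unfold levelCount
  congr 1
  refine Finset.filter_congr fun n hn => ?_
  rw [Finset.mem_range] at hn
  rw [hxy n hn.le, hxy (n + 1) hn]

theorem levelCount_add_const (x : ℕ → ℤ) (θ : ℕ) (c h : ℤ) :
    levelCount (fun n => x n + c) θ (h + c) = levelCount x θ h := by
  simp only [levelCount, add_left_inj, add_right_comm _ c 1]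

theorem levelCount_one (x : ℕ → ℤ) (h : ℤ) :
    levelCount x 1 h = if x 0 = h ∧ x 1 = x 0 + 1 then 1 else 0 := by
  simp [levelCount, Finset.filter_singleton, apply_ite Finset.card]

theorem levelCount_eq_zero_of_lt {x : ℕ → ℤ} {θ : ℕ} {h : ℤ} (hx : ∀ n < θ, h < x n) :
    levelCount x θ h = 0 := by
  simp only [levelCount, Finset.card_eq_zero, Finset.filter_eq_empty_iff, Finset.mem_range]
  exact fun n hn ⟨hxn, _⟩ => (hx n hn).ne' hxn

namespace DyckWord

variable {p q : DyckWord} {n : ℕ}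

def height (p : DyckWord) (n : ℕ) : ℤ := (p.toList.take n).count U - (p.toList.take n).count D

@[simp] lemma height_zero_right (p : DyckWord) : p.height 0 = 0 := by simp [height]

lemma height_nonneg (p : DyckWord) (n : ℕ) : 0 ≤ p.height n := by
  have := p.count_D_le_count_U n
  unfold height; omega

lemma height_of_length_le (hn : p.toList.length ≤ n) : p.height n = 0 := by
  simp [height, take_of_length_le hn, p.count_U_eq_count_D]

lemma height_succ (hn : n < p.toList.length) :
    p.height (n + 1) = p.height n + if p.toList[n] = U then 1 else -1 := by
  rw [height, take_add_one, getElem?_eq_getElem hn]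
  rcases p.toList[n].dichotomy with h | h <;> simp [h, height] <;> ring

lemma height_add_of_le (hn : n ≤ p.toList.length) : (p + q).height n = p.height n := by
  simp only [height]
  rw [show (p + q).toList = p.toList ++ q.toList from rfl, take_append_of_le_length hn]

lemma height_add_length_add (n : ℕ) : (p + q).height (p.toList.length + n) = q.height n := by
  simp only [height]
  rw [show (p + q).toList = p.toList ++ q.toList from rfl, take_length_add_append]
  simp [p.count_U_eq_count_D]

lemma height_nest_succ (hn : n ≤ p.toList.length) : p.nest.height (n + 1) = p.height n + 1 := by
  have : p.nest.toList.take (n + 1) = U :: p.toList.take n := by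
    simp [nest, take_append_of_le_length hn]
  simp only [height, this, count_cons_self, count_cons_of_ne (by decide : U ≠ D)]
  push_cast; ring

lemma IsNested.height_pos (hp : p.IsNested) (h0 : 0 < n) (hn : n < p.toList.length) :
    0 < p.height n := by
  have := hp.2 h0 hn
  unfold height; omega

lemma length_add (p q : DyckWord) : (p + q).toList.length = p.toList.length + q.toList.length :=
  length_append

lemma length_nest (p : DyckWord) : p.nest.toList.length = 1 + p.toList.length + 1 := by
  simp [nest]; ring

def profile (p : DyckWord) (h : ℕ) : ℕ := levelCount p.height p.toList.length h

lemma profile_add (p q : DyckWord) (h : ℕ) : (p + q).profile h = p.profile h + q.profile h := by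
  rw [profile, length_add, levelCount_add,
    levelCount_congr (fun n hn => height_add_of_le hn)]
  simp only [height_add_length_add]
  rfl

lemma levelCount_height_nest (p : DyckWord) (h : ℤ) :
    levelCount p.nest.height p.nest.toList.length h =
      (if h = 0 then 1 else 0) + levelCount (fun n => p.height n + 1) p.toList.length h := by
  have h1 : p.nest.height 1 = 1 := by simpa using height_nest_succ (p := p) (n := 0) (by simp)
  have hlast : p.nest.height (1 + p.toList.length) = 1 := by
    rw [add_comm, height_nest_succ le_rfl, height_of_length_le le_rfl, zero_add]
  rw [length_nest, levelCount_add, levelCount_add, levelCount_one, levelCount_one,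
    levelCount_congr (y := fun n => p.height n + 1) fun n hn => by
      rw [add_comm, height_nest_succ hn]]
  have hend : p.nest.height (1 + p.toList.length + 1) = 0 :=
    height_of_length_le (length_nest p).le
  simp [h1, hlast, hend, eq_comm]

lemma profile_nest_zero (p : DyckWord) : p.nest.profile 0 = 1 := by
  rw [profile, Nat.cast_zero, levelCount_height_nest, if_pos rfl,
    levelCount_eq_zero_of_lt fun n _ => by linarith [p.height_nonneg n]]

lemma profile_nest_succ (p : DyckWord) (h : ℕ) : p.nest.profile (h + 1) = p.profile h := by
  rw [profile, levelCount_height_nest, if_neg (by omega), zero_add, Nat.cast_succ,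
    levelCount_add_const]
  rfl

lemma profile_sum (l : List DyckWord) (h : ℕ) : l.sum.profile h = (l.map (·.profile h)).sum := by
  induction l with
  | nil => rfl
  | cons p l ih => rw [sum_cons, profile_add, ih, map_cons, sum_cons]

def arches (p : DyckWord) : List DyckWord :=
  if p = 0 then [] else p.insidePart :: p.outsidePart.arches
termination_by p.semilength
decreasing_by exact semilength_outsidePart_lt ‹_›

@[simp] lemma arches_zero : (0 : DyckWord).arches = [] := by
  rw [arches, if_pos rfl]

lemma arches_nest_add (p q : DyckWord) : (p.nest + q).arches = p :: q.arches := by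
  rw [arches, if_neg (by simp [← toList_ne_nil, nest]), insidePart_add nest_ne_zero,
    outsidePart_add nest_ne_zero, insidePart_nest, outsidePart_nest, zero_add]

lemma sum_map_nest_arches (p : DyckWord) : (p.arches.map nest).sum = p := by
  induction p using arches.induct with
  | case1 => simp
  | case2 p hp ih =>
    rw [arches, if_neg hp, map_cons, sum_cons, ih, nest_insidePart_add_outsidePart hp]

lemma arches_sum_map_nest_add (l : List DyckWord) (q : DyckWord) :
    ((l.map nest).sum + q).arches = l ++ q.arches := by
  induction l with
  | nil => simp
  | cons p l ih => rw [map_cons, sum_cons, add_assoc, arches_nest_add, ih, cons_append]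

lemma arches_add (p q : DyckWord) : (p + q).arches = p.arches ++ q.arches := by
  conv_lhs => rw [← sum_map_nest_arches p]
  exact arches_sum_map_nest_add _ _

lemma arches_sum_map_nest (l : List DyckWord) : (l.map nest).sum.arches = l := by
  simpa using arches_sum_map_nest_add l 0

lemma arches_sum (l : List DyckWord) : l.sum.arches = (l.map arches).flatten := by
  induction l with
  | nil => simp
  | cons p l ih => rw [sum_cons, arches_add, ih, map_cons, flatten_cons]

lemma arches_injective : Function.Injective arches :=
  Function.LeftInverse.injective (g := fun l => (l.map nest).sum) fun p => sum_map_nest_arches p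

lemma profile_sum_map_nest_zero (l : List DyckWord) : (l.map nest).sum.profile 0 = l.length := by
  simp [profile_sum, Function.comp_def, profile_nest_zero]

lemma profile_sum_map_nest_succ (l : List DyckWord) (h : ℕ) :
    (l.map nest).sum.profile (h + 1) = l.sum.profile h := by
  simp [profile_sum, profile_nest_succ, Function.comp_def]

lemma length_arches (p : DyckWord) : p.arches.length = p.profile 0 := by
  conv_rhs => rw [← sum_map_nest_arches p]
  rw [profile_sum_map_nest_zero]

lemma profile_succ (p : DyckWord) (h : ℕ) : p.profile (h + 1) = p.arches.sum.profile h := by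
  conv_lhs => rw [← sum_map_nest_arches p]
  rw [profile_sum_map_nest_succ]

lemma eq_of_sum_eq_of_map_profile_zero_eq {l l' : List DyckWord} (hs : l.sum = l'.sum)
    (hc : l.map (·.profile 0) = l'.map (·.profile 0)) : l = l' := by
  have hlen : ∀ l : List DyckWord, (l.map arches).map length = l.map (·.profile 0) := fun l => by
    simp [Function.comp_def, length_arches]
  refine map_injective_iff.2 arches_injective <| eq_iff_flatten_eq.2 ⟨?_, ?_⟩
  · rw [← arches_sum, ← arches_sum, hs]
  · rw [hlen, hlen, hc]

lemma exists_sum_eq_of_sum_eq {c : List ℕ} {q : DyckWord} (hc : c.sum = q.profile 0) :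
    ∃ l : List DyckWord, l.map (·.profile 0) = c ∧ l.sum = q := by
  have hc' : c.sum = q.arches.length := by rw [hc, length_arches]
  refine ⟨(c.splitLengths q.arches).map fun L => (L.map nest).sum, ?_, ?_⟩
  · simp only [map_map, Function.comp_def, profile_sum_map_nest_zero]
    exact map_splitLengths_length _ _ hc'.le
  · conv_rhs => rw [← sum_map_nest_arches q, ← flatten_splitLengths q.arches c hc'.ge]
    rw [map_flatten, sum_flatten, map_map]
    rfl

lemma eq_zero_of_profile_zero_eq_zero (hp : p.profile 0 = 0) : p = 0 := by
  rw [← sum_map_nest_arches p, eq_nil_of_length_eq_zero ((length_arches p).trans hp)]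
  rfl

theorem natCard_profile_eq_multichoose_mul (M : ℕ → ℕ) :
    Nat.card {p : DyckWord // p.profile = M} =
      (M 0).multichoose (M 1) * Nat.card {q : DyckWord // q.profile = fun h => M (h + 1)} := by
  let Φ : {p : DyckWord // p.profile = M} →
      {c : List ℕ // c.length = M 0 ∧ c.sum = M 1} ×
        {q : DyckWord // q.profile = fun h => M (h + 1)} := fun p =>
    (⟨p.1.arches.map (·.profile 0), by simp [length_arches, p.2],
        by rw [← profile_sum, ← profile_succ, p.2]⟩,
      ⟨p.1.arches.sum, funext fun h => by rw [← profile_succ, p.2]⟩)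
  have hΦ : Function.Bijective Φ := by
    refine ⟨fun p p' hpp' => ?_, fun ⟨c, q⟩ => ?_⟩
    · simp only [Φ, Prod.mk.injEq, Subtype.mk.injEq] at hpp'
      exact Subtype.ext <| arches_injective <|
        eq_of_sum_eq_of_map_profile_zero_eq hpp'.2 hpp'.1
    · obtain ⟨l, hlc, hlq⟩ := exists_sum_eq_of_sum_eq (c := c.1) (q := q.1)
        (by rw [c.2.2, q.2])
      have hprofile : ((l.map nest).sum).profile = M := funext fun h => by
        cases h with
        | zero => rw [profile_sum_map_nest_zero, ← length_map, hlc, c.2.1]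
        | succ h => rw [profile_sum_map_nest_succ, hlq, q.2]
      refine ⟨⟨_, hprofile⟩, ?_⟩
      simp only [Φ, arches_sum_map_nest, hlc, hlq]
  rw [Nat.card_eq_of_bijective Φ hΦ, Nat.card_prod, List.natCard_length_eq_and_sum_eq]

theorem natCard_profile_eq_prod (M : ℕ → ℕ) (H : ℕ) (hM : ∀ h, H ≤ h → M h = 0) :
    Nat.card {p : DyckWord // p.profile = M} =
      ∏ h ∈ Finset.range H, (M h).multichoose (M (h + 1)) := by
  induction H generalizing M with
  | zero =>
    have : Unique {p : DyckWord // p.profile = M} :=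
      { default := ⟨0, funext fun h => (hM h h.zero_le).symm⟩
        uniq := fun p => Subtype.ext <| eq_zero_of_profile_zero_eq_zero <| by
          rw [p.2, hM 0 le_rfl] }
    simp
  | succ H ih =>
    rw [natCard_profile_eq_multichoose_mul, ih _ fun h hh => hM (h + 1) (by omega),
      Finset.prod_range_succ' _ H, mul_comm]

lemma semilength_sum_map_nest (l : List DyckWord) :
    (l.map nest).sum.semilength = l.sum.semilength + l.length := by
  induction l with
  | nil => rfl
  | cons p l ih =>
    simp only [map_cons, sum_cons, semilength_add, semilength_nest, ih, length_cons]
    ring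

lemma semilength_eq_sum_profile (p : DyckWord) (H : ℕ) (hp : ∀ h, H ≤ h → p.profile h = 0) :
    p.semilength = ∑ h ∈ Finset.range H, p.profile h := by
  induction H generalizing p with
  | zero => simp [eq_zero_of_profile_zero_eq_zero (hp 0 le_rfl)]
  | succ H ih =>
    have hsum : ∀ h, H ≤ h → p.arches.sum.profile h = 0 := fun h hh => by
      rw [← profile_succ, hp (h + 1) (by omega)]
    rw [Finset.sum_range_succ', ← length_arches]
    simp only [profile_succ]
    rw [← ih _ hsum, ← semilength_sum_map_nest, sum_map_nest_arches]

end DyckWord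

def pathSteps (x : ℕ → ℤ) (n : ℕ) : List DyckStep :=
  (range n).map fun i => if x (i + 1) = x i + 1 then U else D

lemma take_pathSteps (x : ℕ → ℤ) (m n : ℕ) : (pathSteps x n).take m = pathSteps x (min m n) := by
  rw [pathSteps, ← map_take, take_range, pathSteps]

lemma count_pathSteps {x : ℕ → ℤ} {n : ℕ}
    (hstep : ∀ m < n, x (m + 1) - x m = 1 ∨ x (m + 1) - x m = -1) :
    ((pathSteps x n).count U : ℤ) - (pathSteps x n).count D = x n - x 0 := by
  induction n with
  | zero => simp [pathSteps]
  | succ n ih =>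
    rw [pathSteps, range_succ, map_append, count_append, count_append, ← pathSteps]
    have := ih fun m hm => hstep m (by omega)
    rcases hstep n (by omega) with h | h
    · simp [show x (n + 1) = x n + 1 by omega]; omega
    · simp [show x (n + 1) ≠ x n + 1 by omega]; omega

lemma IsPosExc.nonneg {x : ℕ → ℤ} {θ n : ℕ} (hx : IsPosExc x θ) (hn : n ≤ θ) : 0 ≤ x n := by
  obtain ⟨h0, hθ, hpos, -⟩ := hx
  rcases n.eq_zero_or_pos with rfl | hn0
  · exact h0.ge
  rcases hn.lt_or_eq with hnθ | rfl
  · exact (hpos n hn0 hnθ).le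
  · exact hθ.ge

lemma IsPosExc.count_take_pathSteps {x : ℕ → ℤ} {θ : ℕ} (hx : IsPosExc x θ) (i : ℕ) :
    (((pathSteps x θ).take i).count U : ℤ) - ((pathSteps x θ).take i).count D = x (min i θ) := by
  rw [take_pathSteps, count_pathSteps fun m hm => hx.2.2.2 m (by omega), hx.1, sub_zero]

namespace DyckWord

def ofPosExc {x : ℕ → ℤ} {θ : ℕ} (hx : IsPosExc x θ) : DyckWord where
  toList := pathSteps x θ
  count_U_eq_count_D := by
    have := hx.count_take_pathSteps θ
    rw [take_of_length_le (by simp [pathSteps]), min_self, hx.2.1] at this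
    omega
  count_D_le_count_U i := by
    have := hx.count_take_pathSteps i
    have := hx.nonneg (min_le_right i θ)
    omega

lemma length_ofPosExc {x : ℕ → ℤ} {θ : ℕ} (hx : IsPosExc x θ) :
    (ofPosExc hx).toList.length = θ := by
  simp [ofPosExc, pathSteps]

lemma height_ofPosExc {x : ℕ → ℤ} {θ : ℕ} (hx : IsPosExc x θ) (n : ℕ) :
    (ofPosExc hx).height n = x (min n θ) :=
  hx.count_take_pathSteps n

lemma toList_eq_pathSteps (p : DyckWord) : p.toList = pathSteps p.height p.toList.length := by
  refine ext_getElem (by simp [pathSteps]) fun i hi _ => ?_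
  simp only [pathSteps, getElem_map, getElem_range, height_succ hi]
  rcases p.toList[i].dichotomy with h | h <;> simp [h]

lemma isNested_of_profile_zero_eq_one {p : DyckWord} (hp : p.profile 0 = 1) : p.IsNested := by
  obtain ⟨a, ha⟩ := length_eq_one_iff.1 ((length_arches p).trans hp)
  rw [← sum_map_nest_arches p, ha, map_singleton, sum_singleton]
  exact IsNested.nest

lemma IsNested.isPosExc_height {p : DyckWord} (hp : p.IsNested) :
    IsPosExc p.height p.toList.length := by
  refine ⟨p.height_zero_right, height_of_length_le le_rfl, fun n h0 hn => hp.height_pos h0 hn,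
    fun n hn => ?_⟩
  rw [height_succ hn]
  rcases p.toList[n].dichotomy with h | h <;> simp [h]

end DyckWord

open DyckWord in
theorem natCard_posExc_eq_natCard_dyckWord (N : ℕ → ℕ) (θ : ℕ) (hN : N 0 = 1) :
    Nat.card {x : ℕ → ℤ //
        IsPosExc x θ ∧ (∀ k, θ ≤ k → x k = 0) ∧ ∀ h : ℕ, levelCount x θ h = N h} =
      Nat.card {p : DyckWord // p.profile = N ∧ p.toList.length = θ} := by
  let Ψ : {p : DyckWord // p.profile = N ∧ p.toList.length = θ} →
      {x : ℕ → ℤ // IsPosExc x θ ∧ (∀ k, θ ≤ k → x k = 0) ∧ ∀ h : ℕ, levelCount x θ h = N h} :=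
    fun p => ⟨p.1.height, by
      obtain ⟨p, hprofile, rfl⟩ := p
      exact ⟨(isNested_of_profile_zero_eq_one (by rw [hprofile, hN])).isPosExc_height,
        fun _ hk => height_of_length_le hk, fun h => congrFun hprofile h⟩⟩
  refine (Nat.card_eq_of_bijective Ψ ⟨fun p p' hpp' => ?_, fun x => ?_⟩).symm
  · have hheight : p.1.height = p'.1.height := congrArg Subtype.val hpp'
    refine Subtype.ext (DyckWord.ext ?_)
    rw [toList_eq_pathSteps p.1, toList_eq_pathSteps p'.1, hheight, p.2.2, p'.2.2]
  · obtain ⟨x, hx, htail, hcount⟩ := x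
    have hheight : (ofPosExc hx).height = x := funext fun n => by
      rw [height_ofPosExc]
      rcases le_total n θ with hn | hn
      · rw [min_eq_left hn]
      · rw [min_eq_right hn, hx.2.1, htail n hn]
    refine ⟨⟨ofPosExc hx, funext fun h => ?_, length_ofPosExc hx⟩, Subtype.ext hheight⟩
    rw [profile, hheight, length_ofPosExc, hcount]

theorem prod_range_multichoose_eq_prod_Icc_choose (N : ℕ → ℕ) (H : ℕ) (h0 : N 0 = 1)
    (hpos : ∀ h, h < H → 0 < N h) (hH : N H = 0) :
    ∏ h ∈ Finset.range H, (N h).multichoose (N (h + 1)) =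
      ∏ h ∈ Finset.Icc 1 (H - 2), (N (h + 1) + N h - 1).choose (N h - 1) := by
  refine (Finset.prod_subset (fun h hh => ?_) fun h hh hh' => ?_).symm.trans
    (Finset.prod_congr rfl fun h hh => ?_)
  · simp only [Finset.mem_Icc, Finset.mem_range] at hh ⊢; omega
  · simp only [Finset.mem_Icc, Finset.mem_range, not_and_or] at hh hh'
    rcases Nat.eq_zero_or_pos h with rfl | hh0
    · rw [h0, Nat.multichoose_one]
    · rw [show h + 1 = H by omega, hH, Nat.multichoose_zero_right]
  · have := hpos h (by simp only [Finset.mem_Icc] at hh; omega)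
    rw [Nat.multichoose_eq, show N h + N (h + 1) - 1 = N (h + 1) + N h - 1 by omega]
    exact Nat.choose_symm_of_eq_add (by omega)

theorem card_excursions_with_level_numbers_general (N : ℕ → ℕ) (H : ℕ)
    (h0 : N 0 = 1) (hpos : ∀ h, h < H → 0 < N h)
    (hzero : ∀ h, H ≤ h → N h = 0) :
    Nat.card {x : ℕ → ℤ //
        IsPosExc x (2 * ∑ h ∈ Finset.range H, N h) ∧
        (∀ k, 2 * ∑ h ∈ Finset.range H, N h ≤ k → x k = 0) ∧
        ∀ h : ℕ, levelCount x (2 * ∑ h ∈ Finset.range H, N h) (h : ℤ) = N h} =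
      ∏ h ∈ Finset.Icc 1 (H - 2), Nat.choose (N (h + 1) + N h - 1) (N h - 1) := by
  have hlength : ∀ p : DyckWord, p.profile = N →
      p.toList.length = 2 * ∑ h ∈ Finset.range H, N h := fun p hp => by
    rw [← DyckWord.two_mul_semilength_eq_length,
      p.semilength_eq_sum_profile H fun h hh => by rw [hp, hzero h hh], hp]
  rw [natCard_posExc_eq_natCard_dyckWord N _ h0,
    Nat.card_congr (Equiv.subtypeEquivRight fun p => and_iff_left_of_imp (hlength p)),
    DyckWord.natCard_profile_eq_prod N H hzero,
    prod_range_multichoose_eq_prod_Icc_choose N H h0 hpos (hzero H le_rfl)]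

/-- the number of positive excursions with prescribed level
numbers `N` equals `∏_{h=1}^{H-2} C(N_{h+1}+N_h-1, N_h-1)`. -/
theorem card_excursions_with_level_numbers (N : ℕ → ℕ) (H : ℕ)
    (h0 : N 0 = 1) (hH : 1 ≤ H) (hpos : ∀ h, h < H → 0 < N h)
    (hzero : ∀ h, H ≤ h → N h = 0) :
    Nat.card {x : ℕ → ℤ //
        IsPosExc x (2 * ∑ h ∈ Finset.range H, N h) ∧
        (∀ k, 2 * ∑ h ∈ Finset.range H, N h ≤ k → x k = 0) ∧
        ∀ h : ℕ, levelCount x (2 * ∑ h ∈ Finset.range H, N h) (h : ℤ) = N h} =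
      ∏ h ∈ Finset.Icc 1 (H - 2), Nat.choose (N (h + 1) + N h - 1) (N h - 1) :=
  card_excursions_with_level_numbers_general N H h0 hpos hzero
end

section
/- The Vervaat transform V is an involution on the set X^U of excursions attaining their height at a unique coordinate: V(V(x)) = x for all x ∈ X^U, and for a positive excursion x ∈ X^{+,U} of height H(x), the level numbers transform as N_{-h}(V(x)) = N_{H(x)-1-h}(x) for h = 0,...,H(x)-1. -/
/-!
The Vervaat transform is a cyclic shift of the closed path `x` on `[0, θ]` (started at the
time `m` of the maximum), followed by a vertical translation by `-H`. For a closed path the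
value at time `n` of the shift by `k` is `x ((n + k) % θ)`, so shifting by `k` and then by
`θ - k` is the identity, and any statistic counting steps `(x n, x (n + 1))` is invariant
under the shift, being a count over one period of a `θ`-periodic predicate. Thus the
down-steps of `V(x)` from `-h` are the down-steps of `x` from `H - h`, and for a `±1` path
starting and ending below level `H - 1 - h` these are as many as its up-steps from
`H - 1 - h`.
-/

open Finset Function

/-- `cyclicShift x θ k` reads the path `x` on `[0, θ]` starting from time `k` and wrapping around
at `θ`; the Vervaat transform of the statement is `cyclicShift (x - H) θ m`. -/
def cyclicShift {α : Type*} (x : ℕ → α) (θ k : ℕ) : ℕ → α :=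
  fun n => if n ≤ θ - k then x (n + k) else x (n + k - θ)

section CyclicShift

variable {α : Type*} {x : ℕ → α} {θ k n : ℕ}

theorem apply_mod_of_apply_zero_eq (hx : x 0 = x θ) (hn : n ≤ θ) : x (n % θ) = x n := by
  rcases hn.lt_or_eq with hn | rfl
  · rw [Nat.mod_eq_of_lt hn]
  · rw [Nat.mod_self, hx]

theorem cyclicShift_apply_eq_mod (hk : k ≤ θ) (hx : x 0 = x θ) (hn : n ≤ θ) :
    cyclicShift x θ k n = x ((n + k) % θ) := by
  unfold cyclicShift
  split_ifs
  · exact (apply_mod_of_apply_zero_eq hx (by omega)).symm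
  · rw [← apply_mod_of_apply_zero_eq hx (show n + k - θ ≤ θ by omega),
      ← Nat.mod_eq_sub_mod (by omega)]

theorem cyclicShift_cyclicShift (hk : k ≤ θ) (hx : x 0 = x θ) (hn : n ≤ θ) :
    cyclicShift (cyclicShift x θ k) θ (θ - k) n = x n := by
  unfold cyclicShift
  split_ifs <;> first
    | (congr 1; omega)
    | (obtain rfl : n = 0 := by omega
       rw [hx]; congr 1; omega)

theorem card_filter_range_add_of_periodic {p : ℕ → Prop} [DecidablePred p] (hp : Periodic p θ)
    (k : ℕ) : #{n ∈ range θ | p (n + k)} = #{n ∈ range θ | p n} := by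
  calc #{n ∈ range θ | p (n + k)} = #{j ∈ Ico k (k + θ) | p j} := by
        have hIco : (range θ).map (addRightEmbedding k) = Ico k (k + θ) := by
          rw [range_eq_Ico, map_add_right_Ico, zero_add, add_comm]
        rw [← hIco, filter_map, card_map]
        rfl
    _ = #{n ∈ range θ | p n} := by
      rw [Nat.filter_Ico_card_eq_of_periodic k θ p hp, Nat.count_eq_card_filter_range]

theorem card_filter_cyclicShift_steps (hk : k ≤ θ) (hx : x 0 = x θ) (P : α → α → Prop)
    [DecidableRel P] :
    #{n ∈ range θ | P (cyclicShift x θ k n) (cyclicShift x θ k (n + 1))} =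
      #{n ∈ range θ | P (x n) (x (n + 1))} := by
  set p : ℕ → Prop := fun j => P (x (j % θ)) (x ((j + 1) % θ))
  have hp : Periodic p θ := fun j => by simp only [p, add_right_comm j θ 1, Nat.add_mod_right]
  calc #{n ∈ range θ | P (cyclicShift x θ k n) (cyclicShift x θ k (n + 1))}
      = #{n ∈ range θ | p (n + k)} := by
        congr 1
        refine filter_congr fun n hn => ?_
        rw [mem_range] at hn
        rw [cyclicShift_apply_eq_mod hk hx hn.le, cyclicShift_apply_eq_mod hk hx (n := n + 1) hn,
          add_right_comm]
    _ = #{n ∈ range θ | p n} := card_filter_range_add_of_periodic hp k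
    _ = #{n ∈ range θ | P (x n) (x (n + 1))} := by
        congr 1
        refine filter_congr fun n hn => ?_
        rw [mem_range] at hn
        simp only [p]
        rw [apply_mod_of_apply_zero_eq hx hn.le, apply_mod_of_apply_zero_eq hx (n := n + 1) hn]

end CyclicShift

theorem levelCountDown_cyclicShift {x : ℕ → ℤ} {θ k : ℕ} (hk : k ≤ θ) (hx : x 0 = x θ)
    (h : ℤ) :
    levelCountDown (cyclicShift x θ k) θ h = levelCountDown x θ h :=
  card_filter_cyclicShift_steps hk hx fun a b => a = h ∧ b = a - 1

theorem levelCountDown_sub_const (x : ℕ → ℤ) (θ : ℕ) (c h : ℤ) :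
    levelCountDown (fun n => x n - c) θ h = levelCountDown x θ (h + c) := by
  unfold levelCountDown
  congr 1
  exact filter_congr fun n _ => by dsimp only; omega

/-- Each ±1 step changes the indicator of `k < x n` by (up-steps from `k`) minus (down-steps
from `k + 1`), so the difference of the two counts telescopes to `[k < x θ] - [k < x 0] = 0`. -/
theorem levelCount_eq_levelCountDown_add_one {x : ℕ → ℤ} {θ : ℕ} {k : ℤ} (h0 : x 0 ≤ k)
    (hθ : x θ ≤ k) (hstep : ∀ n, n < θ → x (n + 1) - x n = 1 ∨ x (n + 1) - x n = -1) :
    levelCount x θ k = levelCountDown x θ (k + 1) := by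
  have hindicator : ∀ n ∈ range θ,
      ((if x n = k ∧ x (n + 1) = x n + 1 then (1 : ℤ) else 0)
        - (if x n = k + 1 ∧ x (n + 1) = x n - 1 then (1 : ℤ) else 0))
      = (if k < x (n + 1) then (1 : ℤ) else 0) - (if k < x n then (1 : ℤ) else 0) := by
    intro n hn
    rcases hstep n (mem_range.mp hn) with hs | hs <;> split_ifs <;> omega
  have hsum := sum_congr rfl hindicator
  rw [sum_range_sub (fun n => if k < x n then (1 : ℤ) else 0), sum_sub_distrib, sum_boole,
    sum_boole] at hsum
  unfold levelCount levelCountDown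
  split_ifs at hsum <;> omega

theorem vervaat_involution_and_level_numbers_general (x v w : ℕ → ℤ) (θ m H : ℕ)
    (hx : IsPosExc x θ) (hmθ : m < θ)
    (hv : ∀ n, v n = if n ≤ θ - m then x (n + m) - H else x (n + m - θ) - H)
    (hw : ∀ n, w n = if n ≤ θ - (θ - m) then v (n + (θ - m)) + H
      else v (n + (θ - m) - θ) + H) :
    (∀ n ≤ θ, w n = x n) ∧
      ∀ h : ℕ, h < H →
        levelCountDown v θ (-(h : ℤ)) = levelCount x θ ((H : ℤ) - 1 - h) := by
  obtain ⟨hx0, hxθ, -, hstep⟩ := hx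
  have hv' : v = cyclicShift (fun n => x n - H) θ m := funext hv
  have hw' : w = cyclicShift (fun n => v n + H) θ (θ - m) := funext hw
  have hvH : (fun n => v n + H) = cyclicShift x θ m := by
    funext n
    rw [hv, cyclicShift]
    split_ifs <;> ring
  refine ⟨fun n hn => ?_, fun h hh => ?_⟩
  · rw [hw', hvH]
    exact cyclicShift_cyclicShift hmθ.le (by rw [hx0, hxθ]) hn
  · rw [hv', levelCountDown_cyclicShift hmθ.le (by simp only [hx0, hxθ]),
      levelCountDown_sub_const, levelCount_eq_levelCountDown_add_one (by omega) (by omega) hstep]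
    congr 1
    ring

/-- the Vervaat transform is an involution on excursions whose
height is attained at a unique coordinate, and for a positive such excursion
the level numbers transform as `N_{-h}(V(x)) = N_{H-1-h}(x)`, `0 ≤ h ≤ H-1`. -/
theorem vervaat_involution_and_level_numbers (x v w : ℕ → ℤ) (θ m H : ℕ)
    (hx : IsPosExc x θ) (hm : 0 < m) (hmθ : m < θ) (hxm : x m = (H : ℤ))
    (hmax : ∀ n ≤ θ, x n ≤ (H : ℤ)) (huniq : ∀ n ≤ θ, x n = (H : ℤ) → n = m)
    (hv : ∀ n, v n = if n ≤ θ - m then x (n + m) - H else x (n + m - θ) - H)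
    (hw : ∀ n, w n = if n ≤ θ - (θ - m) then v (n + (θ - m)) + H
      else v (n + (θ - m) - θ) + H) :
    (∀ n ≤ θ, w n = x n) ∧
      ∀ h : ℕ, h < H →
        levelCountDown v θ (-(h : ℤ)) = levelCount x θ ((H : ℤ) - 1 - h) :=
  vervaat_involution_and_level_numbers_general x v w θ m H hx hmθ hv hw
end
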